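/- Let K be a number field of degree n over ℚ and let p be a rational prime. Then pO_K is a prime ideal of O_K if and only if there does not exist a nonzero totally positive element a ∈ K* with 1 ≤ v_p(N_{K/ℚ}(a)) < n. -/

import Mathlib

/-!
If `p𝓞_K` is prime, it is the only prime above `p` and has norm `p ^ n`; since every other prime
has norm prime to `p`, `v_p (N x)` is divisible by `n` for every `x ∈ K*`.

Otherwise some maximal ideal `P ⊋ p𝓞_K` has norm `p ^ f` with `0 < f < n`. Writing
`p𝓞_K = P ^ k * I` with `I` prime to `P`, the Chinese remainder theorem gives `b` with
`b ≡ π (mod P²)` for some `π ∈ P \ P²` and `b ≡ 1 (mod I)`, so `(b) = P * J` with `J` prime to `p`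
and `v_p (N b) = f`. These congruences are unchanged by adding multiples of `p²`, and adding a
large one makes `b` totally positive.
-/

open NumberField

namespace Ideal

variable {S : Type*} [CommRing S] [IsDedekindDomain S] [Module.Free ℤ S] [Module.Finite ℤ S]
  {p : ℕ}

theorem span_natCast_ne_bot (hp : p ≠ 0) : span {(p : S)} ≠ ⊥ := fun h =>
  pow_ne_zero _ hp (by simpa [h] using (absNorm_span_natCast (S := S) p).symm)

theorem span_natCast_ne_top (hp : 1 < p) : span {(p : S)} ≠ ⊤ := fun h =>
  (Nat.one_lt_pow Module.finrank_pos.ne' hp).ne'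
    (by simpa [h] using (absNorm_span_natCast (S := S) p).symm)

theorem not_dvd_absNorm_of_isCoprime (hp : p.Prime) {J : Ideal S}
    (hJ : IsCoprime (span {(p : S)}) J) : ¬ p ∣ absNorm J := by
  intro hdvd
  obtain ⟨P, hPmax, hPp, hPJ⟩ := exists_isMaximal_dvd_of_dvd_absNorm' hp J hdvd
  have hpP : (p : S) ∈ P := by
    simpa using (hPp ▸ mem_span_singleton_self (p : ℤ) : (p : ℤ) ∈ P.under ℤ)
  rw [isCoprime_iff_sup_eq] at hJ
  exact hPmax.ne_top <| eq_top_iff.2 <|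
    hJ ▸ sup_le ((span_singleton_le_iff_mem _).2 hpP) (le_of_dvd hPJ)

theorem padicValNat_absNorm_mul_of_isCoprime (hp : p.Prime) {I J : Ideal S} (hI : I ≠ ⊥)
    (hJ : IsCoprime (span {(p : S)}) J) :
    padicValNat p (absNorm (I * J)) = padicValNat p (absNorm I) := by
  have := Fact.mk hp
  have hpJ := not_dvd_absNorm_of_isCoprime hp hJ
  have hJ0 : absNorm J ≠ 0 := fun h => hpJ (h ▸ dvd_zero p)
  rw [map_mul, padicValNat.mul (by simpa [absNorm_eq_zero_iff] using hI) hJ0,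
    padicValNat.eq_zero_of_not_dvd hpJ, add_zero]

theorem finrank_dvd_padicValNat_absNorm (hp : p.Prime) (hpS : (span {(p : S)}).IsPrime)
    (I : Ideal S) : Module.finrank ℤ S ∣ padicValNat p (absNorm I) := by
  rcases eq_or_ne I ⊥ with rfl | hI
  · simp
  have hp0 := span_natCast_ne_bot (S := S) hp.ne_zero
  obtain ⟨e, J, hpJ, rfl⟩ :=
    WfDvdMonoid.max_power_factor hI (prime_of_isPrime hp0 hpS).irreducible
  have hJ : IsCoprime (span {(p : S)}) J := isCoprime_iff_codisjoint.2 <|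
    (hpS.isMaximal hp0).out.not_le_iff_codisjoint.1 (mt dvd_iff_le.2 hpJ)
  have := Fact.mk hp
  rw [padicValNat_absNorm_mul_of_isCoprime hp (pow_ne_zero _ hp0) hJ, map_pow,
    absNorm_span_natCast, ← pow_mul, padicValNat.prime_pow]
  exact dvd_mul_right _ _

theorem padicValNat_absNorm_pos_and_lt_finrank (hp : p.Prime) {P : Ideal S}
    (hpP : span {(p : S)} < P) (hP : P ≠ ⊤) :
    0 < padicValNat p (absNorm P) ∧ padicValNat p (absNorm P) < Module.finrank ℤ S := by
  have := Fact.mk hp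
  obtain ⟨f, hf, hPf⟩ := (Nat.dvd_prime_pow hp).1
    (absNorm_span_natCast (S := S) p ▸ absNorm_dvd_absNorm_of_le hpP.le)
  rw [hPf, padicValNat.prime_pow]
  refine ⟨Nat.pos_of_ne_zero fun hf0 => hP (absNorm_eq_one_iff.1 (by rw [hPf, hf0, pow_zero])),
    lt_of_le_of_ne hf ?_⟩
  rintro rfl
  obtain ⟨C, hC⟩ := dvd_iff_le.2 hpP.le
  have hC1 : absNorm C = 1 := by
    have := congrArg absNorm hC
    rw [map_mul, absNorm_span_natCast, hPf] at this
    exact (Nat.mul_eq_left (pow_pos hp.pos _).ne').1 this.symm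
  rw [absNorm_eq_one_iff.1 hC1, mul_top] at hC
  exact hpP.ne hC

/-- Every maximal ideal containing `p` other than `P` contains `I`, so the hypotheses on `b` say
that `span {b} = P * J` with `J` coprime to `p`. -/
theorem padicValNat_absNorm_span_eq_of_sub_one_mem (hp : p.Prime) {P I : Ideal S}
    (hP : P.IsMaximal) {k : ℕ} (hPI : P ^ k * I ≤ span {(p : S)}) {b : S} (hbP : b ∈ P)
    (hbP2 : b ∉ P ^ 2) (hbI : b - 1 ∈ I) :
    padicValNat p (absNorm (span {b})) = padicValNat p (absNorm P) := by
  obtain ⟨J, hbPJ⟩ := dvd_iff_le.2 ((span_singleton_le_iff_mem P).2 hbP)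
  have hbPJ' : b ∈ P * J := hbPJ ▸ mem_span_singleton_self b
  have hJ : IsCoprime (span {(p : S)}) J := by
    rw [isCoprime_iff_sup_eq]
    by_contra hne
    obtain ⟨M, hM, hle⟩ := exists_le_maximal _ hne
    have := hM.isPrime
    rcases hM.isPrime.mul_le.1 (hPI.trans (le_sup_left.trans hle)) with hPM | hIM
    · rw [← hP.eq_of_le hM.ne_top (hM.isPrime.le_of_pow_le hPM)] at hle
      exact hbP2 (pow_two P ▸ mul_mono_right (le_sup_right.trans hle) hbPJ')
    · exact hM.ne_top <| (eq_top_iff_one _).2 <| by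
        simpa using M.sub_mem (hle (mem_sup_right (mul_le_right hbPJ'))) (hIM hbI)
  have hP0 : P ≠ ⊥ := by
    rintro rfl
    exact hbP2 (by simpa using hbP)
  rw [hbPJ, padicValNat_absNorm_mul_of_isCoprime hp hP0 hJ]

theorem exists_sub_mem_of_isCoprime {R : Type*} [CommRing R] {A B : Ideal R}
    (h : IsCoprime A B) (x y : R) : ∃ c, c - x ∈ A ∧ c - y ∈ B := by
  obtain ⟨a, ha, b, hb, hab⟩ := isCoprime_iff_exists.1 h
  refine ⟨y * a + x * b, ?_, ?_⟩
  · convert A.mul_mem_left (y - x) ha using 1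
    linear_combination x * hab
  · convert B.mul_mem_left (x - y) hb using 1
    linear_combination y * hab

end Ideal

theorem NumberField.exists_forall_pos_add_natCast_mul {K : Type*} [Field K] [NumberField K]
    (x : K) {d : ℕ} (hd : d ≠ 0) : ∃ m : ℕ, ∀ φ : K →+* ℝ, 0 < φ (x + d * m) := by
  obtain ⟨M, hM⟩ := Finite.exists_le fun φ : K →+* ℝ => -φ x
  obtain ⟨m, hm⟩ := exists_nat_gt M
  refine ⟨m, fun φ => ?_⟩
  have hd1 : (1 : ℝ) ≤ d := by exact_mod_cast Nat.one_le_iff_ne_zero.2 hd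
  have hφ := hM φ
  simp only [map_add, map_mul, map_natCast]
  nlinarith

open Ideal

namespace NumberField.RingOfIntegers

variable {K : Type*} [Field K] [NumberField K] {p : ℕ}

theorem padicValRat_norm_eq_padicValNat_absNorm (x : 𝓞 K) :
    padicValRat p (Algebra.norm ℚ (x : K)) = padicValNat p (absNorm (span {x})) := by
  rw [← Algebra.coe_norm_int, padicValRat.of_int, absNorm_span_singleton]
  rfl

theorem finrank_dvd_padicValRat_norm (hp : p.Prime) (hpK : (span {(p : 𝓞 K)}).IsPrime)
    (a : K) : (Module.finrank ℚ K : ℤ) ∣ padicValRat p (Algebra.norm ℚ a) := by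
  have := Fact.mk hp
  have hdvd (z : 𝓞 K) : (Module.finrank ℚ K : ℤ) ∣ padicValRat p (Algebra.norm ℚ (z : K)) := by
    rw [padicValRat_norm_eq_padicValNat_absNorm, ← RingOfIntegers.rank]
    exact_mod_cast finrank_dvd_padicValNat_absNorm hp hpK _
  obtain ⟨x, y, hy, rfl⟩ := IsFractionRing.div_surjective (A := 𝓞 K) a
  rcases eq_or_ne x 0 with rfl | hx
  · simp
  have hy : y ≠ 0 := nonZeroDivisors.ne_zero hy
  rw [div_eq_mul_inv, map_mul, Algebra.norm_inv, ← div_eq_mul_inv,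
    padicValRat.div (by simpa using hx) (by simpa using hy)]
  exact dvd_sub (hdvd x) (hdvd y)

theorem exists_forall_pos_padicValNat_absNorm_span_eq (hp : p.Prime) {P : Ideal (𝓞 K)}
    (hP : P.IsMaximal) (hpP : span {(p : 𝓞 K)} ≤ P) :
    ∃ b : 𝓞 K, (∀ φ : K →+* ℝ, 0 < φ b) ∧
      padicValNat p (absNorm (span {b})) = padicValNat p (absNorm P) := by
  have hp0 := span_natCast_ne_bot (S := 𝓞 K) hp.ne_zero
  have hP0 : P ≠ ⊥ := ne_bot_of_le_ne_bot hp0 hpP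
  obtain ⟨k, I, hPI, hspan⟩ :=
    WfDvdMonoid.max_power_factor hp0 (prime_of_isPrime hP0 hP.isPrime).irreducible
  have hcop : IsCoprime (P ^ 2) I := IsCoprime.pow_left <| isCoprime_iff_codisjoint.2 <|
    hP.out.not_le_iff_codisjoint.1 (mt dvd_iff_le.2 hPI)
  obtain ⟨π, hπP, hπP2⟩ := exists_mem_pow_notMem_pow_succ P hP0 hP.ne_top 1
  rw [pow_one] at hπP
  obtain ⟨c, hcπ, hc1⟩ := exists_sub_mem_of_isCoprime hcop π 1
  obtain ⟨m, hm⟩ := exists_forall_pos_add_natCast_mul (c : K) (pow_ne_zero 2 hp.ne_zero)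
  have hpI : (p : 𝓞 K) ∈ I := mul_le_right (hspan ▸ mem_span_singleton_self _ : _ ∈ P ^ k * I)
  have hdP2 : (p : 𝓞 K) ^ 2 * m ∈ P ^ 2 :=
    mul_mem_right _ _ (pow_mem_pow (hpP (mem_span_singleton_self _)) 2)
  have hdI : (p : 𝓞 K) ^ 2 * m ∈ I := mul_mem_right _ _ (pow_mem_of_mem _ hpI 2 two_pos)
  have hbπ : c + (p : 𝓞 K) ^ 2 * m - π ∈ P ^ 2 := by
    simpa only [add_sub_right_comm] using add_mem hcπ hdP2
  refine ⟨c + (p : 𝓞 K) ^ 2 * m, fun φ => by simpa using hm φ,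
    padicValNat_absNorm_span_eq_of_sub_one_mem hp hP hspan.ge ?_ ?_ ?_⟩
  · simpa using add_mem hπP (pow_le_self two_ne_zero hbπ)
  · exact fun hb => hπP2 (by simpa using sub_mem hb hbπ)
  · simpa only [add_sub_right_comm] using add_mem hc1 hdI

end NumberField.RingOfIntegers

open NumberField.RingOfIntegers

/-- A rational prime `p` is non-split in a number field `K` of degree `n`
(i.e. `p 𝓞_K` is a prime ideal) if and only if there is no nonzero totally positive `a ∈ K`
with `1 ≤ v_p(N_{K/ℚ}(a)) < n`. -/
theorem span_isPrime_iff_not_exists_totallyPositive_padicValRat_norm_lt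
    (K : Type*) [Field K] [NumberField K] (n : ℕ) (hn : n = Module.finrank ℚ K)
    (p : ℕ) (hp : p.Prime) :
    (Ideal.span {(p : 𝓞 K)}).IsPrime ↔
      ¬ ∃ a : K, a ≠ 0 ∧ (∀ φ : K →+* ℝ, 0 < φ a) ∧
        1 ≤ padicValRat p (Algebra.norm ℚ a) ∧ padicValRat p (Algebra.norm ℚ a) < (n : ℤ) := by
  subst hn
  constructor
  · rintro hpK ⟨a, -, -, h1, h2⟩
    have := Int.eq_zero_of_dvd_of_nonneg_of_lt (by omega) h2 (finrank_dvd_padicValRat_norm hp hpK a)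
    omega
  · contrapose!
    intro hpK
    obtain ⟨P, hP, hpP⟩ := exists_le_maximal _ (span_natCast_ne_top (S := 𝓞 K) hp.one_lt)
    have hpP' : span {(p : 𝓞 K)} < P := lt_of_le_of_ne hpP fun h => hpK (h ▸ hP.isPrime)
    obtain ⟨hpos, hlt⟩ := padicValNat_absNorm_pos_and_lt_finrank hp hpP' hP.ne_top
    obtain ⟨b, hb, hbP⟩ := exists_forall_pos_padicValNat_absNorm_span_eq hp hP hpP
    rw [← hbP] at hlt hpos
    rw [RingOfIntegers.rank] at hlt
    refine ⟨b, fun h => ?_, hb, ?_, ?_⟩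
    · simp [RingOfIntegers.coe_eq_zero_iff.1 h] at hpos
    · rw [padicValRat_norm_eq_padicValNat_absNorm]
      exact_mod_cast hpos
    · rw [padicValRat_norm_eq_padicValNat_absNorm]
      exact_mod_cast hlt
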